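/- For an equivalence n-simplex {C_k}, define ∂_k : ℂ[A_k] → ℂ[A_{k−1}] by ∂_k(c) = Σ_{ℓ=0}^k (−1)^ℓ d_ℓ(c) for k ≥ 1 and let ∂_0 : ℂ[A_0] → ℂ be the augmentation; define p_k : ℂ[A_k] → ℂ[C_k] by p_k(c) = [c] if c ∉ B_k and p_k(c) = 0 if c ∈ B_k, and let p_{−1} = id_ℂ. Then p_{k−1} ∘ ∂_k = D_k ∘ p_k for every 1 ≤ k ≤ n, and ∂_0 = D_0 ∘ p_0; moreover each p_k is surjective. -/

import Mathlib

/-!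
On a tuple `c ∉ B_k`, `p ∘ ∂` is literally the sum defining `D[c]`. If instead `c_m ∼ c_{m+1}`,
then `p c = 0`, and in `p (∂ c)` every face other than `d_m c` and `d_{m+1} c` still contains the
related adjacent pair, hence is killed by `p`; the two remaining faces are `≈`-equivalent and carry
opposite signs, so they cancel. Surjectivity holds because `[c] = p c` for each basis element.
-/

open Finset
open scoped Classical

/-- Strictly increasing `m`-tuples with values in `[n] = {0, 1, …, n}`.
The set `A_k` of the equivalence `n`-simplex corresponds to `Chain n (k+1)`. -/
def Chain (n m : ℕ) : Type :=
  {c : Fin m → Fin (n + 1) // StrictMono c}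

/-- The `ℓ`-th face map: delete the `ℓ`-th coordinate of a tuple. -/
def face {n m : ℕ} (ℓ : Fin (m + 1)) (c : Chain n (m + 1)) : Chain n m :=
  ⟨c.1 ∘ ℓ.succAbove, c.2.comp (Fin.strictMono_succAbove ℓ)⟩

/-- The predicate `B`: some two adjacent coordinates are related by `r`. -/
def hasAdj {n : ℕ} (r : Fin (n + 1) → Fin (n + 1) → Prop) {m : ℕ} (c : Chain n m) : Prop :=
  ∃ i j : Fin m, (i : ℕ) + 1 = (j : ℕ) ∧ r (c.1 i) (c.1 j)

/-- The componentwise relation `≈` on tuples. -/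
def cApprox {n : ℕ} (r : Fin (n + 1) → Fin (n + 1) → Prop) {m : ℕ}
    (c c' : Chain n m) : Prop :=
  ∀ i, r (c.1 i) (c'.1 i)

/-- `C_k`: the quotient of `A_k ∖ B_k` by the componentwise relation `≈`. -/
def CSet (n : ℕ) (r : Fin (n + 1) → Fin (n + 1) → Prop) (k : ℕ) : Type :=
  Quot (fun c c' : {c : Chain n (k + 1) // ¬ hasAdj r c} => cApprox r c.1 c'.1)

/-- The class `[c] ∈ C_k` of a tuple `c ∈ A_k ∖ B_k`. -/
def cls {n : ℕ} (r : Fin (n + 1) → Fin (n + 1) → Prop) {k : ℕ} (c : Chain n (k + 1))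
    (hc : ¬ hasAdj r c) : CSet n r k :=
  Quot.mk _ (⟨c, hc⟩ : {c : Chain n (k + 1) // ¬ hasAdj r c})

/-- `D` is the family of differentials, `D k` being the statement's
`D_{k+1} : ℂ[C_{k+1}] → ℂ[C_k]`, given on basis elements `[c]` by
`D_{k+1}([c]) = ∑_{ℓ ∈ F(c)} (−1)^ℓ [d_ℓ(c)]`. -/
def IsD (n : ℕ) (r : Fin (n + 1) → Fin (n + 1) → Prop)
    (D : ∀ k : ℕ, ((CSet n r (k + 1)) →₀ ℂ) →ₗ[ℂ] ((CSet n r k) →₀ ℂ)) : Prop :=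
  ∀ (k : ℕ) (c : Chain n (k + 2)) (hc : ¬ hasAdj r c),
    D k (Finsupp.single (cls r c hc) 1) =
      ∑ ℓ : Fin (k + 2),
        if h : ¬ hasAdj r (face ℓ c) then
          ((-1 : ℂ) ^ (ℓ : ℕ)) • Finsupp.single (cls r (face ℓ c) h) 1
        else 0

/-- `D0` is the augmentation `D_0 : ℂ[C_0] → ℂ`, sending each basis element to `1`. -/
def IsD0 (n : ℕ) (r : Fin (n + 1) → Fin (n + 1) → Prop)
    (D0 : ((CSet n r 0) →₀ ℂ) →ₗ[ℂ] ℂ) : Prop :=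
  ∀ q : CSet n r 0, D0 (Finsupp.single q 1) = 1

/-- `∂` is the family of boundary maps on `ℂ[A_k]`: `∂ k` is the statement's
`∂_{k+1} : ℂ[A_{k+1}] → ℂ[A_k]`, the full alternating sum of faces. -/
def IsDel (n : ℕ)
    (del : ∀ k : ℕ, ((Chain n (k + 2)) →₀ ℂ) →ₗ[ℂ] ((Chain n (k + 1)) →₀ ℂ)) : Prop :=
  ∀ (k : ℕ) (c : Chain n (k + 2)),
    del k (Finsupp.single c 1) =
      ∑ ℓ : Fin (k + 2), ((-1 : ℂ) ^ (ℓ : ℕ)) • Finsupp.single (face ℓ c) 1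

/-- `∂_0 : ℂ[A_0] → ℂ` is the augmentation. -/
def IsDel0 (n : ℕ) (del0 : ((Chain n 1) →₀ ℂ) →ₗ[ℂ] ℂ) : Prop :=
  ∀ c : Chain n 1, del0 (Finsupp.single c 1) = 1

/-- `p` is the family of projections `p_k : ℂ[A_k] → ℂ[C_k]`, sending `c` to `[c]` if
`c ∉ B_k` and to `0` if `c ∈ B_k`. -/
def IsP (n : ℕ) (r : Fin (n + 1) → Fin (n + 1) → Prop)
    (p : ∀ k : ℕ, ((Chain n (k + 1)) →₀ ℂ) →ₗ[ℂ] ((CSet n r k) →₀ ℂ)) : Prop :=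
  ∀ (k : ℕ) (c : Chain n (k + 1)),
    p k (Finsupp.single c 1) =
      if h : ¬ hasAdj r c then Finsupp.single (cls r c h) 1 else 0

namespace Fin

lemma val_succAbove {m : ℕ} (ℓ : Fin (m + 1)) (i : Fin m) :
    (ℓ.succAbove i : ℕ) = if (i : ℕ) < ℓ then (i : ℕ) else (i : ℕ) + 1 := by
  unfold succAbove
  split_ifs <;> simp_all [lt_def]

end Fin

section

variable {n : ℕ} {r : Fin (n + 1) → Fin (n + 1) → Prop}

/-- `p_k c` for a basis tuple `c`. -/
noncomputable def proj (r : Fin (n + 1) → Fin (n + 1) → Prop) {k : ℕ} (c : Chain n (k + 1)) :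
    CSet n r k →₀ ℂ :=
  if h : ¬ hasAdj r c then Finsupp.single (cls r c h) 1 else 0

lemma hasAdj_of_cApprox (hr : Equivalence r) {m : ℕ} {c c' : Chain n m} (hcc : cApprox r c c')
    (h : hasAdj r c) : hasAdj r c' := by
  obtain ⟨i, j, hij, hrij⟩ := h
  exact ⟨i, j, hij, hr.trans (hr.trans (hr.symm (hcc i)) hrij) (hcc j)⟩

lemma proj_eq_of_cApprox (hr : Equivalence r) {k : ℕ} {c c' : Chain n (k + 1)}
    (hcc : cApprox r c c') : proj r c = proj r c' := by
  have hc'c : cApprox r c' c := fun i => hr.symm (hcc i)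
  by_cases hc : hasAdj r c
  · simp only [proj, dif_neg (not_not_intro hc),
      dif_neg (not_not_intro (hasAdj_of_cApprox hr hcc hc))]
  · have hc' : ¬ hasAdj r c' := fun h => hc (hasAdj_of_cApprox hr hc'c h)
    simp only [proj, dif_pos hc, dif_pos hc']
    exact congrArg (Finsupp.single · 1) (Quot.sound hcc)

lemma cApprox_face_castSucc_face_succ (hr : Equivalence r) {k : ℕ} (c : Chain n (k + 2))
    (m : Fin (k + 1)) (hm : r (c.1 m.castSucc) (c.1 m.succ)) :
    cApprox r (face m.castSucc c) (face m.succ c) := by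
  intro i
  change r (c.1 (m.castSucc.succAbove i)) (c.1 (m.succ.succAbove i))
  rcases lt_trichotomy i m with h | rfl | h
  · rw [Fin.succAbove_castSucc_of_lt _ _ h, Fin.succAbove_succ_of_le _ _ h.le]
    exact hr.refl _
  · rw [Fin.succAbove_castSucc_self, Fin.succAbove_succ_self]
    exact hr.symm hm
  · rw [Fin.succAbove_castSucc_of_le _ _ h.le, Fin.succAbove_succ_of_lt _ _ h]
    exact hr.refl _

lemma hasAdj_face_of_ne {k : ℕ} (c : Chain n (k + 2)) (m : Fin (k + 1))
    (hm : r (c.1 m.castSucc) (c.1 m.succ)) {ℓ : Fin (k + 2)}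
    (h₁ : ℓ ≠ m.castSucc) (h₂ : ℓ ≠ m.succ) : hasAdj r (face ℓ c) := by
  have hℓ₁ : (ℓ : ℕ) ≠ m := fun h => h₁ (Fin.ext h)
  have hℓ₂ : (ℓ : ℕ) ≠ m + 1 := fun h => h₂ (Fin.ext h)
  -- the pair `c_m, c_{m+1}` sits at positions `i, i + 1` of the face, shifted down iff `ℓ < m`
  obtain ⟨i, hi⟩ : ∃ i : ℕ, i + 1 ≤ k ∧ ((ℓ : ℕ) < m ∧ i + 1 = m ∨ m + 1 < (ℓ : ℕ) ∧ i = m) := by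
    rcases Nat.lt_or_gt_of_ne hℓ₁ with h | h
    · exact ⟨m - 1, by omega⟩
    · exact ⟨m, by omega⟩
  have ha : ℓ.succAbove ⟨i, by omega⟩ = m.castSucc := by
    ext
    simp only [Fin.val_succAbove, Fin.val_castSucc]
    split_ifs <;> omega
  have hb : ℓ.succAbove ⟨i + 1, by omega⟩ = m.succ := by
    ext
    simp only [Fin.val_succAbove, Fin.val_succ]
    split_ifs <;> omega
  refine ⟨⟨i, by omega⟩, ⟨i + 1, by omega⟩, rfl, ?_⟩
  change r (c.1 (ℓ.succAbove _)) (c.1 (ℓ.succAbove _))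
  rwa [ha, hb]

lemma sum_proj_face_eq_zero (hr : Equivalence r) {k : ℕ} (c : Chain n (k + 2))
    (hc : hasAdj r c) : ∑ ℓ : Fin (k + 2), ((-1 : ℂ) ^ (ℓ : ℕ)) • proj r (face ℓ c) = 0 := by
  obtain ⟨i, j, hij, hrij⟩ := hc
  set m : Fin (k + 1) := ⟨i, by omega⟩
  have hm : r (c.1 m.castSucc) (c.1 m.succ) := by
    rwa [show m.castSucc = i from rfl, show m.succ = j from Fin.ext (by simp [m]; omega)]
  have hne : m.castSucc ≠ m.succ := Fin.castSucc_lt_succ.ne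
  have hvanish : ∀ ℓ ∈ univ, ℓ ∉ ({m.castSucc, m.succ} : Finset _) →
      ((-1 : ℂ) ^ (ℓ : ℕ)) • proj r (face ℓ c) = 0 := by
    intro ℓ _ hℓ
    simp only [mem_insert, mem_singleton, not_or] at hℓ
    rw [proj, dif_neg (not_not_intro (hasAdj_face_of_ne c m hm hℓ.1 hℓ.2)), smul_zero]
  rw [← sum_subset (subset_univ _) hvanish, sum_pair hne,
    proj_eq_of_cApprox hr (cApprox_face_castSucc_face_succ hr c m hm), Fin.val_castSucc,
    Fin.val_succ, pow_succ, mul_neg_one, neg_smul, add_neg_cancel]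

lemma IsD.apply_single_cls {D : ∀ k : ℕ, ((CSet n r (k + 1)) →₀ ℂ) →ₗ[ℂ] ((CSet n r k) →₀ ℂ)}
    (hD : IsD n r D) {k : ℕ} (c : Chain n (k + 2)) (hc : ¬ hasAdj r c) :
    D k (Finsupp.single (cls r c hc) 1) =
      ∑ ℓ : Fin (k + 2), ((-1 : ℂ) ^ (ℓ : ℕ)) • proj r (face ℓ c) := by
  simp only [hD k c hc, proj, smul_dite, smul_zero]

variable {p : ∀ k : ℕ, ((Chain n (k + 1)) →₀ ℂ) →ₗ[ℂ] ((CSet n r k) →₀ ℂ)}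

lemma p_comp_del_eq_D_comp_p (hr : Equivalence r)
    {D : ∀ k : ℕ, ((CSet n r (k + 1)) →₀ ℂ) →ₗ[ℂ] ((CSet n r k) →₀ ℂ)} (hD : IsD n r D)
    {del : ∀ k : ℕ, ((Chain n (k + 2)) →₀ ℂ) →ₗ[ℂ] ((Chain n (k + 1)) →₀ ℂ)}
    (hdel : IsDel n del) (hp : IsP n r p) (k : ℕ) :
    (p k).comp (del k) = (D k).comp (p (k + 1)) := by
  refine Finsupp.lhom_ext' fun c => LinearMap.ext_ring ?_
  have hlhs : p k (del k (Finsupp.single c 1)) =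
      ∑ ℓ : Fin (k + 2), ((-1 : ℂ) ^ (ℓ : ℕ)) • proj r (face ℓ c) := by
    simp only [hdel k c, map_sum, map_smul, hp k, proj]
  simp only [LinearMap.comp_apply, Finsupp.lsingle_apply, hlhs, hp (k + 1) c]
  by_cases hc : hasAdj r c
  · rw [dif_neg (not_not_intro hc), map_zero, sum_proj_face_eq_zero hr c hc]
  · rw [dif_pos hc, hD.apply_single_cls]

lemma del0_eq_D0_comp_p {D0 : ((CSet n r 0) →₀ ℂ) →ₗ[ℂ] ℂ} (hD0 : IsD0 n r D0)
    {del0 : ((Chain n 1) →₀ ℂ) →ₗ[ℂ] ℂ} (hdel0 : IsDel0 n del0) (hp : IsP n r p) :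
    del0 = D0.comp (p 0) := by
  refine Finsupp.lhom_ext' fun c => LinearMap.ext_ring ?_
  have hc : ¬ hasAdj r c := by
    rintro ⟨i, j, hij, -⟩
    omega
  simp only [LinearMap.comp_apply, Finsupp.lsingle_apply, hdel0 c, hp 0 c, dif_pos hc,
    hD0 (cls r c hc)]

lemma IsP.surjective (hp : IsP n r p) (k : ℕ) : Function.Surjective (p k) := by
  rw [← LinearMap.range_eq_top, eq_top_iff, ← Finsupp.basisSingleOne.span_eq, Submodule.span_le]
  rintro _ ⟨q, rfl⟩
  obtain ⟨⟨c, hc⟩, rfl⟩ := Quot.exists_rep q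
  exact ⟨Finsupp.single c 1, by rw [hp k c, dif_pos hc]; rfl⟩

end

theorem stmt6_general (n : ℕ) (r : Fin (n + 1) → Fin (n + 1) → Prop) (hr : Equivalence r)
    (D : ∀ k : ℕ, ((CSet n r (k + 1)) →₀ ℂ) →ₗ[ℂ] ((CSet n r k) →₀ ℂ))
    (hD : IsD n r D)
    (D0 : ((CSet n r 0) →₀ ℂ) →ₗ[ℂ] ℂ) (hD0 : IsD0 n r D0)
    (del : ∀ k : ℕ, ((Chain n (k + 2)) →₀ ℂ) →ₗ[ℂ] ((Chain n (k + 1)) →₀ ℂ))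
    (hdel : IsDel n del)
    (del0 : ((Chain n 1) →₀ ℂ) →ₗ[ℂ] ℂ) (hdel0 : IsDel0 n del0)
    (p : ∀ k : ℕ, ((Chain n (k + 1)) →₀ ℂ) →ₗ[ℂ] ((CSet n r k) →₀ ℂ)) (hp : IsP n r p) :
    (∀ j : ℕ, j + 1 ≤ n → (p j).comp (del j) = (D j).comp (p (j + 1))) ∧
    del0 = D0.comp (p 0) ∧
    ∀ k : ℕ, Function.Surjective ⇑(p k) :=
  ⟨fun j _ => p_comp_del_eq_D_comp_p hr hD hdel hp j, del0_eq_D0_comp_p hD0 hdel0 hp,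
    hp.surjective⟩

/-- The projections `p_k` form a surjective chain map from `(ℂ[A_k], ∂)` to `(ℂ[C_k], D)`:
`p_{k-1} ∘ ∂_k = D_k ∘ p_k` for `1 ≤ k ≤ n` (below, `k = j + 1`, with `p_{-1} = id_ℂ`),
`∂_0 = D_0 ∘ p_0`, and each `p_k` is surjective. -/
theorem stmt6 (n : ℕ) (r : Fin (n + 1) → Fin (n + 1) → Prop) (hr : Equivalence r)
    (hadj : ∀ i j : Fin (n + 1), r i j → (i : ℕ) ≠ (j : ℕ) + 1 ∧ (j : ℕ) ≠ (i : ℕ) + 1)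
    (D : ∀ k : ℕ, ((CSet n r (k + 1)) →₀ ℂ) →ₗ[ℂ] ((CSet n r k) →₀ ℂ))
    (hD : IsD n r D)
    (D0 : ((CSet n r 0) →₀ ℂ) →ₗ[ℂ] ℂ) (hD0 : IsD0 n r D0)
    (del : ∀ k : ℕ, ((Chain n (k + 2)) →₀ ℂ) →ₗ[ℂ] ((Chain n (k + 1)) →₀ ℂ))
    (hdel : IsDel n del)
    (del0 : ((Chain n 1) →₀ ℂ) →ₗ[ℂ] ℂ) (hdel0 : IsDel0 n del0)
    (p : ∀ k : ℕ, ((Chain n (k + 1)) →₀ ℂ) →ₗ[ℂ] ((CSet n r k) →₀ ℂ)) (hp : IsP n r p) :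
    (∀ j : ℕ, j + 1 ≤ n → (p j).comp (del j) = (D j).comp (p (j + 1))) ∧
    del0 = D0.comp (p 0) ∧
    ∀ k : ℕ, Function.Surjective ⇑(p k) :=
  stmt6_general n r hr D hD D0 hD0 del hdel del0 hdel0 p hp
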